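/- arXiv:2507.11883 — 4 statements merged into one kernel-verified Lean document; each statement's English description precedes it below -/
import Mathlib

section
/- If a coalition structure C maximizes social welfare for a characteristic function v in class V_δ, then every coalition S in C has at most δ players. -/
/-- If a coalition structure `C` maximizes social welfare for a characteristic
function `v ∈ V_δ`, then every coalition in `C` has at most `δ` players. -/
theorem stmt_0 {N : Type*} [Fintype N] [DecidableEq N]
    (v : Finset N → ℝ) (lo hi : ℝ) (δ : ℕ)
    (hδ : 0 < δ)
    (hlo : 0 < lo)
    (hmono : ∀ S T : Finset N, S ⊆ T → v S ≤ v T)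
    (hbound : ∀ S : Finset N, S.Nonempty → lo ≤ v S ∧ v S ≤ hi)
    (hVδ : (δ : ℝ) * lo ≤ hi ∧ hi < ((δ : ℝ) + 1) * lo)
    (C : Finset (Finset N))
    (hdisj : ∀ S ∈ C, ∀ T ∈ C, S ≠ T → Disjoint S T)
    (hcover : C.biUnion id = Finset.univ)
    (hne : ∀ S ∈ C, S.Nonempty)
    (hopt : ∀ C' : Finset (Finset N),
      (∀ S ∈ C', ∀ T ∈ C', S ≠ T → Disjoint S T) →
      C'.biUnion id = Finset.univ →
      (∀ S ∈ C', S.Nonempty) →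
      ∑ S ∈ C', v S ≤ ∑ S ∈ C, v S) :
    ∀ S ∈ C, S.card ≤ δ := by
  intro S hS
  by_contra hcard
  push_neg at hcard
  -- Build the refined structure: replace S by singletons of its elements.
  set C' : Finset (Finset N) := (C.erase S) ∪ S.image (fun x => ({x} : Finset N)) with hC'
  have hsingS : ∀ x ∈ S, ({x} : Finset N) ∉ C.erase S := by
    intro x hx hmem
    have hC : ({x} : Finset N) ∈ C := Finset.mem_of_mem_erase hmem
    have hne' : ({x} : Finset N) ≠ S := Finset.ne_of_mem_erase hmem
    have := hdisj _ hC _ hS hne'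
    exact (Finset.disjoint_left.mp this (Finset.mem_singleton_self x)) hx
  have hdisj' : ∀ A ∈ C', ∀ B ∈ C', A ≠ B → Disjoint A B := by
    intro A hA B hB hAB
    simp only [hC', Finset.mem_union, Finset.mem_image] at hA hB
    rcases hA with hA | ⟨x, hx, rfl⟩
    · rcases hB with hB | ⟨y, hy, rfl⟩
      · exact hdisj _ (Finset.mem_of_mem_erase hA) _ (Finset.mem_of_mem_erase hB) hAB
      · have hd := hdisj _ (Finset.mem_of_mem_erase hA) _ hS (Finset.ne_of_mem_erase hA)
        exact hd.mono_right (Finset.singleton_subset_iff.mpr hy)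
    · rcases hB with hB | ⟨y, hy, rfl⟩
      · have hd := hdisj _ hS _ (Finset.mem_of_mem_erase hB) (Finset.ne_of_mem_erase hB).symm
        exact (hd.mono_left (Finset.singleton_subset_iff.mpr hx))
      · have : x ≠ y := fun h => hAB (by rw [h])
        simp only [Finset.disjoint_singleton]
        exact this
  have hcover' : C'.biUnion id = Finset.univ := by
    apply Finset.eq_univ_iff_forall.mpr
    intro a
    have : a ∈ C.biUnion id := hcover ▸ Finset.mem_univ a
    rcases Finset.mem_biUnion.mp this with ⟨T, hT, haT⟩
    apply Finset.mem_biUnion.mpr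
    by_cases hTS : T = S
    · refine ⟨{a}, ?_, Finset.mem_singleton_self a⟩
      exact Finset.mem_union_right _ (Finset.mem_image.mpr ⟨a, hTS ▸ haT, rfl⟩)
    · exact ⟨T, Finset.mem_union_left _ (Finset.mem_erase.mpr ⟨hTS, hT⟩), haT⟩
  have hne' : ∀ T ∈ C', T.Nonempty := by
    intro T hT
    simp only [hC', Finset.mem_union, Finset.mem_image] at hT
    rcases hT with hT | ⟨x, _, rfl⟩
    · exact hne _ (Finset.mem_of_mem_erase hT)
    · exact Finset.singleton_nonempty x
  have hkey := hopt C' hdisj' hcover' hne'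
  -- Compute sums
  have hdisjU : Disjoint (C.erase S) (S.image (fun x => ({x} : Finset N))) := by
    rw [Finset.disjoint_right]
    intro T hT
    rcases Finset.mem_image.mp hT with ⟨x, hx, rfl⟩
    exact hsingS x hx
  have hsum1 : ∑ T ∈ C', v T = ∑ T ∈ C.erase S, v T + ∑ x ∈ S, v {x} := by
    rw [hC', Finset.sum_union hdisjU, Finset.sum_image]
    intro x _ y _ h
    exact Finset.singleton_injective h
  have hsum2 : ∑ T ∈ C, v T = v S + ∑ T ∈ C.erase S, v T :=
    (Finset.add_sum_erase _ _ hS).symm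
  have hlow : (S.card : ℝ) * lo ≤ ∑ x ∈ S, v {x} := by
    calc (S.card : ℝ) * lo = ∑ _x ∈ S, lo := by rw [Finset.sum_const, nsmul_eq_mul]
    _ ≤ ∑ x ∈ S, v {x} := Finset.sum_le_sum fun x _ =>
        (hbound {x} (Finset.singleton_nonempty x)).1
  have hvS : v S ≤ hi := (hbound S (hne S hS)).2
  have hgt : v S < ∑ x ∈ S, v {x} := by
    have h1 : ((δ : ℝ) + 1) * lo ≤ (S.card : ℝ) * lo := by
      apply mul_le_mul_of_nonneg_right _ hlo.le
      have : (δ + 1 : ℕ) ≤ S.card := hcard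
      exact_mod_cast this
    linarith [hVδ.2]
  rw [hsum1, hsum2] at hkey
  linarith
end

section
/- If every coalition S in a partition C of N satisfies v(S) ≥ min + (|S|−1)·(min+h) for some h ≥ 0, and v ∈ V_δ, then every coalition in C has at most ⌈δ·min/(min+h)⌉ players. -/
/-- If every coalition `S` in a partition satisfies
`v S ≥ min + (|S|−1)·(min+h)` with `h ≥ 0`, and `v ∈ V_δ`, then every
coalition has at most `⌈δ·min/(min+h)⌉` players. -/
theorem stmt_2 {N : Type*} [Fintype N] [DecidableEq N]
    (v : Finset N → ℝ) (lo hi h : ℝ) (δ : ℕ)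
    (hδ : 0 < δ)
    (hlo : 0 < lo) (hh : 0 ≤ h)
    (hub : ∀ S : Finset N, v S ≤ hi)
    (hVδ : (δ : ℝ) * lo ≤ hi ∧ hi < ((δ : ℝ) + 1) * lo)
    (C : Finset (Finset N))
    (hdisj : ∀ S ∈ C, ∀ T ∈ C, S ≠ T → Disjoint S T)
    (hcover : C.biUnion id = Finset.univ)
    (hne : ∀ S ∈ C, S.Nonempty)
    (hval : ∀ S ∈ C, lo + ((S.card : ℝ) - 1) * (lo + h) ≤ v S) :
    ∀ S ∈ C, (S.card : ℤ) ≤ ⌈(δ : ℝ) * lo / (lo + h)⌉ := by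
  intro S hS
  have hpos : 0 < lo + h := by linarith
  have h1 : lo + ((S.card : ℝ) - 1) * (lo + h) < ((δ : ℝ) + 1) * lo :=
    lt_of_le_of_lt (le_trans (hval S hS) (hub S)) hVδ.2
  have h2 : ((S.card : ℝ) - 1) * (lo + h) < (δ : ℝ) * lo := by ring_nf at h1 ⊢; linarith
  have h3 : ((S.card : ℝ) - 1) < (δ : ℝ) * lo / (lo + h) := (lt_div_iff₀ hpos).2 h2
  have h4 : ((S.card : ℝ) - 1) < (⌈(δ : ℝ) * lo / (lo + h)⌉ : ℝ) :=
    lt_of_lt_of_le h3 (Int.le_ceil _)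
  have h5 : ((S.card : ℤ) - 1 : ℝ) < (⌈(δ : ℝ) * lo / (lo + h)⌉ : ℝ) := by push_cast; push_cast at h4; linarith
  have h6 : (S.card : ℤ) - 1 < ⌈(δ : ℝ) * lo / (lo + h)⌉ := by exact_mod_cast h5
  omega
end

section
/- For reals 0 < min ≤ max with max ≥ 2·min, setting h = √(min·(min+4·max)) − 3·min yields h ≥ 0, h ≤ max − 2·min, and min{2·min/(2·min+h), (4·min+h)/(2·max)} = (min + √(min·(min+4·max)))/(2·max). -/
/-- For `0 < min ≤ max` with `max ≥ 2·min`, the threshold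
`h = √(min·(min+4·max)) − 3·min` satisfies `0 ≤ h ≤ max − 2·min` and
`min{2·min/(2·min+h), (4·min+h)/(2·max)} = (min + √(min·(min+4·max)))/(2·max)`. -/
theorem stmt_6 (lo hi : ℝ) (hlo : 0 < lo) (hlohi : lo ≤ hi) (h2 : 2 * lo ≤ hi) :
    let h := Real.sqrt (lo * (lo + 4 * hi)) - 3 * lo
    0 ≤ h ∧ h ≤ hi - 2 * lo ∧
      min (2 * lo / (2 * lo + h)) ((4 * lo + h) / (2 * hi)) =
        (lo + Real.sqrt (lo * (lo + 4 * hi))) / (2 * hi) := by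
  intro h
  have hnn : (0:ℝ) ≤ lo * (lo + 4 * hi) := by nlinarith
  set s := Real.sqrt (lo * (lo + 4 * hi)) with hsdef
  have hs2 : s ^ 2 = lo * (lo + 4 * hi) := Real.sq_sqrt hnn
  have hsnn : 0 ≤ s := Real.sqrt_nonneg _
  have h3 : 3 * lo ≤ s := by nlinarith
  have hle : s ≤ hi + lo := by nlinarith
  have hh : h = s - 3 * lo := rfl
  refine ⟨by rw [hh]; linarith, by rw [hh]; linarith, ?_⟩
  have key : 2 * lo / (2 * lo + h) = (lo + s) / (2 * hi) := by
    rw [hh, div_eq_div_iff (by linarith) (by linarith)]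
    nlinarith
  have key2 : (4 * lo + h) / (2 * hi) = (lo + s) / (2 * hi) := by
    rw [hh]; ring_nf
  rw [key, key2, min_self]
end

section
/- For positive reals min ≤ max and even integer n = 2k with k ≥ 1: max{3·min/max, 2·(max−min)/(n·max) + min/max} ≤ 3/n if n ≤ max/min − 1, and ≤ 3·min/max otherwise. -/
/-- Upper-bound computation for non-anticipative policies:
`max{3·min/max, 2·(max−min)/(n·max) + min/max}` is at most `3/n` when
`n ≤ max/min − 1`, and at most `3·min/max` otherwise. -/
theorem stmt_16 (lo hi : ℝ) (hlo : 0 < lo) (hlohi : lo ≤ hi) (h3 : 3 * lo ≤ hi)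
    (n k : ℤ) (hk : 1 ≤ k) (hnk : n = 2 * k) :
    ((n : ℝ) ≤ hi / lo - 1 →
      max (3 * lo / hi) (2 * (hi - lo) / ((n : ℝ) * hi) + lo / hi) ≤ 3 / (n : ℝ)) ∧
    (¬ (n : ℝ) ≤ hi / lo - 1 →
      max (3 * lo / hi) (2 * (hi - lo) / ((n : ℝ) * hi) + lo / hi) ≤ 3 * lo / hi) := by
  have hhi : 0 < hi := lt_of_lt_of_le hlo hlohi
  have hn2 : (2 : ℝ) ≤ (n : ℝ) := by
    have : (2 : ℤ) ≤ n := by omega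
    exact_mod_cast this
  have hn : (0 : ℝ) < (n : ℝ) := by linarith
  have key : 2 * (hi - lo) / ((n : ℝ) * hi) + lo / hi
      = (2 * (hi - lo) + (n : ℝ) * lo) / ((n : ℝ) * hi) := by
    field_simp
  constructor
  · intro h
    have h' : ((n : ℝ) + 1) * lo ≤ hi := by
      have h1 : (n : ℝ) + 1 ≤ hi / lo := by linarith
      calc ((n : ℝ) + 1) * lo ≤ (hi / lo) * lo := by nlinarith
        _ = hi := by field_simp
    apply max_le
    · rw [div_le_div_iff₀ hhi hn]; nlinarith
    · rw [key, div_le_div_iff₀ (by positivity) hn]; nlinarith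
  · intro h
    push_neg at h
    have h' : hi < ((n : ℝ) + 1) * lo := by
      have h1 : hi / lo < (n : ℝ) + 1 := by linarith
      calc hi = (hi / lo) * lo := by field_simp
        _ < ((n : ℝ) + 1) * lo := by nlinarith
    apply max_le le_rfl
    rw [key, div_le_div_iff₀ (by positivity) hhi]; nlinarith
end
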